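/- The domain D₀ is invariant under the semigroup Γ: for every n ∈ ℕ and k ∈ ℤ, γ_{n,k}(D₀) ⊆ D₀. Moreover the map z ↦ z/2 maps D₀ onto D₁ = {z : 0 < Im z < 2/3} \ ⋃_{n,k} S⁺_{n,k}, and D₁ ⊆ D₀. -/

import Mathlib

/-
STATEMENT 4: The domain D₀ is invariant under the semigroup Γ: for every n ∈ ℕ and
k ∈ ℤ, γ_{n,k}(D₀) ⊆ D₀. Moreover the map z ↦ z/2 maps D₀ onto
D₁ = {z : 0 < Im z < 2/3} \ ⋃_{n,k} S⁺_{n,k}, and D₁ ⊆ D₀.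
-/

noncomputable section

/-- γ_{n,k}(z) = 2^{−n}(z + k). -/
def gammaMap (n : ℕ) (k : ℤ) (z : ℂ) : ℂ := (2 : ℂ) ^ (-(n : ℤ)) * (z + (k : ℂ))

/-- The square S⁺_{0,0} = {z : |Re z| ≤ 3/10, |Im z − 1| ≤ 3/10}. -/
def Sp00 : Set ℂ := {z : ℂ | |z.re| ≤ 3 / 10 ∧ |z.im - 1| ≤ 3 / 10}

/-- S⁺_{n,k} = γ_{n,k}(S⁺_{0,0}). -/
def Sp (n : ℕ) (k : ℤ) : Set ℂ := gammaMap n k '' Sp00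

lemma two_pow_c (n : ℕ) : (2:ℂ)^n = (((2:ℝ)^n : ℝ) : ℂ) := by push_cast; ring

lemma gamma_eq (n : ℕ) (k : ℤ) (z : ℂ) :
    gammaMap n k z = ((((2:ℝ)^n)⁻¹ : ℝ) : ℂ) * (z + (k : ℂ)) := by
  rw [gammaMap, zpow_neg, zpow_natCast, two_pow_c]
  push_cast
  ring

lemma gamma_re (n : ℕ) (k : ℤ) (z : ℂ) :
    (gammaMap n k z).re = (z.re + k) / 2^n := by
  rw [gamma_eq]
  rw [Complex.re_ofReal_mul]
  simp [div_eq_inv_mul]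

lemma gamma_im (n : ℕ) (k : ℤ) (z : ℂ) :
    (gammaMap n k z).im = z.im / 2^n := by
  rw [gamma_eq]
  rw [Complex.im_ofReal_mul]
  simp [div_eq_inv_mul]

lemma mem_Sp_iff (n : ℕ) (k : ℤ) (z : ℂ) :
    z ∈ Sp n k ↔ |(2:ℝ)^n * z.re - k| ≤ 3/10 ∧ |(2:ℝ)^n * z.im - 1| ≤ 3/10 := by
  have h2n : (0:ℝ) < 2^n := by positivity
  constructor
  · rintro ⟨w, ⟨h1, h2⟩, rfl⟩
    rw [gamma_re, gamma_im]
    constructor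
    · have : (2:ℝ)^n * ((w.re + k)/2^n) - k = w.re := by field_simp; ring
      rw [this]; exact h1
    · have : (2:ℝ)^n * (w.im/2^n) = w.im := by field_simp
      rw [this]; exact h2
  · rintro ⟨h1, h2⟩
    refine ⟨(((2:ℝ)^n : ℝ) : ℂ) * z - k, ⟨?_, ?_⟩, ?_⟩
    · rw [Complex.sub_re, Complex.re_ofReal_mul]
      simpa using h1
    · rw [Complex.sub_im, Complex.im_ofReal_mul]
      simpa using h2
    · rw [gamma_eq]
      have : (((2:ℝ)^n : ℝ) : ℂ) ≠ 0 := by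
        simp only [ne_eq, Complex.ofReal_eq_zero]; positivity
      rw [sub_add_cancel, ← mul_assoc, ← Complex.ofReal_mul, inv_mul_cancel₀ h2n.ne', Complex.ofReal_one, one_mul]

/-- D₀ = {z : 0 < Im z < 4/3} \ ⋃_{n,k} S⁺_{n,k}. -/
def D0 : Set ℂ := {z : ℂ | 0 < z.im ∧ z.im < 4 / 3} \ ⋃ (n : ℕ), ⋃ (k : ℤ), Sp n k

/-- D₁ = {z : 0 < Im z < 2/3} \ ⋃_{n,k} S⁺_{n,k}. -/
def D1 : Set ℂ := {z : ℂ | 0 < z.im ∧ z.im < 2 / 3} \ ⋃ (n : ℕ), ⋃ (k : ℤ), Sp n k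

lemma gamma_mem_D0 (n : ℕ) (k : ℤ) {z : ℂ} (hz : z ∈ D0) : gammaMap n k z ∈ D0 := by
  obtain ⟨⟨h0, h43⟩, hU⟩ := hz
  have h2n : (1:ℝ) ≤ 2^n := one_le_pow₀ (by norm_num : (1:ℝ) ≤ 2)
  have h2n0 : (0:ℝ) < 2^n := by linarith
  constructor
  · rw [Set.mem_setOf_eq, gamma_im]
    constructor
    · positivity
    · calc z.im / 2^n ≤ z.im := by
            apply div_le_self (le_of_lt h0) h2n
        _ < 4/3 := h43
  · intro hmem
    rw [Set.mem_iUnion₂] at hmem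
    obtain ⟨m, j, hm⟩ := hmem
    rw [mem_Sp_iff, gamma_re, gamma_im] at hm
    obtain ⟨hre, him⟩ := hm
    rcases le_or_gt n m with hnm | hmn
    · -- z ∈ Sp (m-n) (j - 2^(m-n) k)
      apply hU
      rw [Set.mem_iUnion₂]
      refine ⟨m - n, j - 2^(m-n) * k, ?_⟩
      rw [mem_Sp_iff]
      have hpow : (2:ℝ)^m = 2^(m-n) * 2^n := by
        rw [← pow_add]; congr 1; omega
      constructor
      · have : (2:ℝ)^(m-n) * z.re - ((j - 2^(m-n) * k : ℤ) : ℝ)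
            = (2:ℝ)^m * ((z.re + k)/2^n) - j := by
          rw [hpow]; push_cast; field_simp; ring
        rw [this]; exact hre
      · have : (2:ℝ)^(m-n) * z.im - 1 = (2:ℝ)^m * (z.im/2^n) - 1 := by
          rw [hpow]; field_simp
        rw [this]; exact him
    · -- contradiction from imaginary part
      have h1 : (2:ℝ)^m * (z.im/2^n) ≥ 7/10 := by
        have := abs_le.mp him
        linarith [this.1]
      have h2 : (2:ℝ)^(m+1) ≤ 2^n := pow_le_pow_right₀ (by norm_num) hmn
      have h3 : (2:ℝ)^m * (z.im/2^n) < 2/3 := by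
        rw [mul_div_assoc', div_lt_iff₀ h2n0]
        have hm0 : (0:ℝ) < 2^m := by positivity
        nlinarith [pow_succ (2:ℝ) m]
      linarith

theorem D0_invariance :
    (∀ (n : ℕ) (k : ℤ), gammaMap n k '' D0 ⊆ D0) ∧
    ((fun z : ℂ => z / 2) '' D0 = D1) ∧
    D1 ⊆ D0 := by
  have half : ∀ z : ℂ, z / 2 = gammaMap 1 0 z := by
    intro z
    rw [gammaMap]
    push_cast
    rw [add_zero, zpow_neg, zpow_one, div_eq_inv_mul]
  refine ⟨?_, ?_, ?_⟩
  · rintro n k z ⟨w, hw, rfl⟩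
    exact gamma_mem_D0 n k hw
  · ext w
    constructor
    · rintro ⟨z, hz, rfl⟩
      have h1 : gammaMap 1 0 z ∈ D0 := gamma_mem_D0 1 0 hz
      show z / 2 ∈ D1
      rw [half]
      refine ⟨?_, h1.2⟩
      rw [Set.mem_setOf_eq, gamma_im]
      refine ⟨h1.1.1.trans_eq (by rw [gamma_im]), ?_⟩
      have := hz.1.2
      norm_num
      linarith
    · rintro ⟨⟨h0, h23⟩, hU⟩
      refine ⟨2 * w, ⟨⟨?_, ?_⟩, ?_⟩, ?_⟩
      · simp [Complex.mul_im]; linarith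
      · simp [Complex.mul_im]; linarith
      · intro hmem
        rw [Set.mem_iUnion₂] at hmem
        obtain ⟨m, j, hm⟩ := hmem
        rw [mem_Sp_iff] at hm
        apply hU
        rw [Set.mem_iUnion₂]
        refine ⟨m + 1, j, ?_⟩
        rw [mem_Sp_iff]
        constructor
        · have : (2:ℝ)^(m+1) * w.re - j = 2^m * (2*w).re - j := by
            simp [Complex.mul_re, pow_succ]; ring
          rw [this]; exact hm.1
        · have : (2:ℝ)^(m+1) * w.im - 1 = 2^m * (2*w).im - 1 := by
            simp [Complex.mul_im, pow_succ]; ring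
          rw [this]; exact hm.2
      · field_simp
  · rintro z ⟨⟨h0, h23⟩, hU⟩
    exact ⟨⟨h0, by linarith⟩, hU⟩


end
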